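/- arXiv:2309.01412 — 6 statements merged into one kernel-verified Lean document; each statement's English description precedes it below -/
import Mathlib

section
/- The linear dilation d(s) = exp(sG) satisfies ‖d(s)x‖ ≤ e^{βs}‖x‖ for all s ≤ 0 and all x (strict monotonicity with respect to the weighted norm ‖x‖ = √(xᵀPx)) for some β > 0 if and only if P ≻ 0 and PG + GᵀP ≻ 0. -/
open Matrix NormedSpace

noncomputable def dil {n : ℕ} (G : Matrix (Fin n) (Fin n) ℝ) (s : ℝ) :
    Matrix (Fin n) (Fin n) ℝ :=
  NormedSpace.exp (s • G)

/-- The weighted norm `‖x‖ = √(xᵀ P x)`. -/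
noncomputable def wnorm {n : ℕ} (P : Matrix (Fin n) (Fin n) ℝ) (x : Fin n → ℝ) : ℝ :=
  Real.sqrt (x ⬝ᵥ P.mulVec x)

/-!
Along an orbit `y(t) = exp(tG) x` the Lyapunov function `V(t) = yᵀPy` has derivative
`yᵀ(PG + GᵀP)y`. Strict monotonicity with rate `β` says `V(s) ≤ e^{2βs} V(0)` for `s ≤ 0`, i.e.
`e^{-2βt} V(t)` stays below its value at `t = 0` for `t ≤ 0`; differentiating at `t = 0` gives
`xᵀ(PG + GᵀP)x ≥ 2β xᵀPx > 0`. Conversely, if `PG + GᵀP ≻ 0` then `εP ≤ PG + GᵀP` in the Loewner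
order for some `ε > 0`, so `e^{-εt} V(t)` is nondecreasing, which is the estimate with `β = ε/2`.
-/

open scoped MatrixOrder

section Comparison

variable {φ : ℝ → ℝ} {c : ℝ}

lemma HasDerivAt.nonneg_of_le_left {f : ℝ → ℝ} {f' a : ℝ} (hf : HasDerivAt f f' a)
    (hle : ∀ t < a, f t ≤ f a) : 0 ≤ f' := by
  refine ge_of_tendsto (hasDerivAt_iff_tendsto_slope_left_right.mp hf).1 ?_
  filter_upwards [self_mem_nhdsWithin] with t (ht : t < a)
  rw [slope_def_field]
  exact div_nonneg_of_nonpos (sub_nonpos.2 (hle t ht)) (sub_nonpos.2 ht.le)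

lemma HasDerivAt.exp_neg_mul_mul {φ' t : ℝ} (hφ : HasDerivAt φ φ' t) :
    HasDerivAt (fun t => Real.exp (-(c * t)) * φ t) (Real.exp (-(c * t)) * (φ' - c * φ t)) t := by
  have hexp : HasDerivAt (fun t => Real.exp (-(c * t))) (Real.exp (-(c * t)) * -c) t := by
    simpa using (((hasDerivAt_id t).const_mul c).fun_neg).exp
  exact (hexp.fun_mul hφ).congr_deriv (by ring)

lemma le_exp_mul_mul_of_mul_le_deriv {φ' : ℝ → ℝ} (hφ : ∀ t, HasDerivAt φ (φ' t) t)
    (hc : ∀ t, c * φ t ≤ φ' t) {s : ℝ} (hs : s ≤ 0) : φ s ≤ Real.exp (c * s) * φ 0 := by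
  have hmono : Monotone fun t => Real.exp (-(c * t)) * φ t :=
    monotone_of_hasDerivAt_nonneg (fun t => (hφ t).exp_neg_mul_mul)
      fun t => mul_nonneg (Real.exp_nonneg _) (sub_nonneg.2 (hc t))
  have := mul_le_mul_of_nonneg_left (hmono hs) (Real.exp_nonneg (c * s))
  simpa [← mul_assoc, ← Real.exp_add] using this

lemma mul_le_of_le_exp_mul_mul {φ' : ℝ} (hφ : HasDerivAt φ φ' 0)
    (h : ∀ s < 0, φ s ≤ Real.exp (c * s) * φ 0) : c * φ 0 ≤ φ' := by
  have := hφ.exp_neg_mul_mul (c := c) |>.nonneg_of_le_left fun s hs => by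
    have := mul_le_mul_of_nonneg_left (h s hs) (Real.exp_nonneg (-(c * s)))
    simpa [← mul_assoc, ← Real.exp_add] using this
  simpa using this

end Comparison

section QuadraticForms

variable {ι : Type*} [Fintype ι]

lemma HasDerivAt.dotProduct {𝕜 : Type*} [NontriviallyNormedField 𝕜] {u v : 𝕜 → ι → 𝕜}
    {u' v' : ι → 𝕜} {t : 𝕜} (hu : HasDerivAt u u' t) (hv : HasDerivAt v v' t) :
    HasDerivAt (fun t => u t ⬝ᵥ v t) (u' ⬝ᵥ v t + u t ⬝ᵥ v') t := by
  have h : HasDerivAt (fun t => u t ⬝ᵥ v t) (∑ i, (u' i * v t i + u t i * v' i)) t :=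
    HasDerivAt.fun_sum fun i _ => (hasDerivAt_pi.mp hu i).fun_mul (hasDerivAt_pi.mp hv i)
  rwa [Finset.sum_add_distrib] at h

lemma dotProduct_mulVec_mul_add_transpose_mul {R : Type*} [CommSemiring R] (P G : Matrix ι ι R)
    (y : ι → R) :
    y ⬝ᵥ (P * G + Gᵀ * P) *ᵥ y = (G *ᵥ y) ⬝ᵥ P *ᵥ y + y ⬝ᵥ P *ᵥ (G *ᵥ y) := by
  rw [add_mulVec, dotProduct_add, ← mulVec_mulVec, ← mulVec_mulVec, dotProduct_mulVec y Gᵀ,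
    vecMul_transpose, add_comm]

lemma HasDerivAt.dotProduct_mulVec_self {P G : Matrix ι ι ℝ} {u : ℝ → ι → ℝ} {t : ℝ}
    (hu : HasDerivAt u (G *ᵥ u t) t) :
    HasDerivAt (fun t => u t ⬝ᵥ P *ᵥ u t) (u t ⬝ᵥ (P * G + Gᵀ * P) *ᵥ u t) t := by
  rw [dotProduct_mulVec_mul_add_transpose_mul]
  exact hu.dotProduct ((P.mulVecLin.toContinuousLinearMap.hasFDerivAt).comp_hasDerivAt t hu)

lemma Matrix.IsHermitian.mul_add_transpose_mul {P : Matrix ι ι ℝ} (hP : P.IsHermitian)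
    (G : Matrix ι ι ℝ) : (P * G + Gᵀ * P).IsHermitian := by
  have hPt : Pᵀ = P := by simpa [conjTranspose_eq_transpose_of_trivial] using hP.eq
  simp [IsHermitian, conjTranspose_eq_transpose_of_trivial, transpose_mul, hPt, add_comm]

variable [DecidableEq ι]

lemma Matrix.PosDef.exists_pos_smul_le {P Q : Matrix ι ι ℝ} (hP : P.IsHermitian)
    (hQ : Q.PosDef) : ∃ ε : ℝ, 0 < ε ∧ ε • P ≤ Q := by
  cases subsingleton_or_nontrivial (Matrix ι ι ℝ)
  · exact ⟨1, one_pos, (Subsingleton.elim _ _).le⟩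
  obtain ⟨r, hr, hrQ⟩ := (CFC.exists_pos_algebraMap_le_iff hQ.isHermitian.isSelfAdjoint).2
    fun x hx => hQ.isStrictlyPositive.spectrum_pos hx
  obtain ⟨R, hR⟩ := (Set.finite_range hP.eigenvalues).bddAbove
  have hPR : P ≤ algebraMap ℝ _ (max R 1) := le_algebraMap_of_spectrum_le fun x hx => by
    rw [hP.spectrum_real_eq_range_eigenvalues] at hx
    exact (hR hx).trans (le_max_left _ _)
  refine ⟨r / max R 1, by positivity, ?_⟩
  calc (r / max R 1) • P ≤ (r / max R 1) • algebraMap ℝ _ (max R 1) :=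
        smul_le_smul_of_nonneg_left hPR (by positivity)
    _ = algebraMap ℝ _ r := by rw [Algebra.smul_def, ← map_mul, div_mul_cancel₀ _ (by positivity)]
    _ ≤ Q := hrQ

lemma Matrix.PosDef.exists_pos_mul_dotProduct_mulVec_le {P Q : Matrix ι ι ℝ}
    (hP : P.IsHermitian) (hQ : Q.PosDef) :
    ∃ ε : ℝ, 0 < ε ∧ ∀ y : ι → ℝ, ε * (y ⬝ᵥ P *ᵥ y) ≤ y ⬝ᵥ Q *ᵥ y := by
  obtain ⟨ε, hε, hle⟩ := hQ.exists_pos_smul_le hP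
  refine ⟨ε, hε, fun y => ?_⟩
  simpa only [star_trivial, sub_mulVec, smul_mulVec, dotProduct_sub, dotProduct_smul,
    smul_eq_mul, sub_nonneg] using (Matrix.le_iff.mp hle).dotProduct_mulVec_nonneg y

end QuadraticForms

section Dilation

variable {n : ℕ}

attribute [local instance] Matrix.linftyOpNormedRing Matrix.linftyOpNormedAlgebra in
lemma hasDerivAt_dil_mulVec (G : Matrix (Fin n) (Fin n) ℝ) (x : Fin n → ℝ) (t : ℝ) :
    HasDerivAt (fun t => dil G t *ᵥ x) (G *ᵥ (dil G t *ᵥ x)) t := by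
  let L : Matrix (Fin n) (Fin n) ℝ →ₗ[ℝ] (Fin n → ℝ) :=
    { toFun := fun M => M *ᵥ x
      map_add' := fun A B => add_mulVec A B x
      map_smul' := fun c A => smul_mulVec c A x }
  have h : HasDerivAt (fun t => L (NormedSpace.exp (t • G))) (L (G * NormedSpace.exp (t • G))) t :=
    L.toContinuousLinearMap.hasFDerivAt.comp_hasDerivAt t (hasDerivAt_exp_smul_const' G t)
  simpa [dil, L, mulVec_mulVec] using h

lemma dil_zero_mulVec (G : Matrix (Fin n) (Fin n) ℝ) (x : Fin n → ℝ) : dil G 0 *ᵥ x = x := by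
  simp [dil]

lemma wnorm_le_exp_mul_wnorm_iff {P : Matrix (Fin n) (Fin n) ℝ} (hP : P.PosSemidef)
    (y x : Fin n → ℝ) (β s : ℝ) :
    wnorm P y ≤ Real.exp (β * s) * wnorm P x ↔
      y ⬝ᵥ P *ᵥ y ≤ Real.exp (2 * β * s) * (x ⬝ᵥ P *ᵥ x) := by
  have hx : 0 ≤ x ⬝ᵥ P *ᵥ x := by simpa using hP.dotProduct_mulVec_nonneg x
  rw [wnorm, wnorm, ← Real.sqrt_sq (Real.exp_nonneg _), ← Real.sqrt_mul (sq_nonneg _),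
    Real.sqrt_le_sqrt_iff (by positivity), ← Real.exp_nat_mul, mul_assoc]
  norm_num

end Dilation

/-- the dilation `d(s)=exp(sG)` is strictly monotone w.r.t. `‖x‖ = √(xᵀPx)`
(i.e. `∃ β > 0` with `‖d(s)x‖ ≤ e^{βs}‖x‖` for all `s ≤ 0`) iff `P ≻ 0` and `PG + GᵀP ≻ 0`. -/
theorem stmt2 {n : ℕ} (P G : Matrix (Fin n) (Fin n) ℝ) (hP : P.PosDef) :
    (∃ β : ℝ, 0 < β ∧ ∀ s : ℝ, s ≤ 0 → ∀ x : Fin n → ℝ,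
        wnorm P (dil G s *ᵥ x) ≤ Real.exp (β * s) * wnorm P x) ↔
    (P.PosDef ∧ (P * G + Gᵀ * P).PosDef) := by
  have hV : ∀ x t, HasDerivAt (fun t => (dil G t *ᵥ x) ⬝ᵥ P *ᵥ (dil G t *ᵥ x))
      ((dil G t *ᵥ x) ⬝ᵥ (P * G + Gᵀ * P) *ᵥ (dil G t *ᵥ x)) t :=
    fun x t => (hasDerivAt_dil_mulVec G x t).dotProduct_mulVec_self
  simp only [wnorm_le_exp_mul_wnorm_iff hP.posSemidef]
  constructor
  · rintro ⟨β, hβ, hdecay⟩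
    refine ⟨hP, .of_dotProduct_mulVec_pos (hP.isHermitian.mul_add_transpose_mul G) fun x hx => ?_⟩
    have hPx : 0 < x ⬝ᵥ P *ᵥ x := by simpa using hP.dotProduct_mulVec_pos hx
    have hrate : 2 * β * (x ⬝ᵥ P *ᵥ x) ≤ x ⬝ᵥ (P * G + Gᵀ * P) *ᵥ x := by
      simpa only [dil_zero_mulVec] using mul_le_of_le_exp_mul_mul (hV x 0) fun s hs => by
        simpa only [dil_zero_mulVec] using hdecay s hs.le x
    rw [star_trivial]
    exact (by positivity : 0 < 2 * β * (x ⬝ᵥ P *ᵥ x)).trans_le hrate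
  · rintro ⟨-, hQ⟩
    obtain ⟨ε, hε, hεQ⟩ := hQ.exists_pos_mul_dotProduct_mulVec_le hP.isHermitian
    refine ⟨ε / 2, by positivity, fun s hs x => ?_⟩
    have := le_exp_mul_mul_of_mul_le_deriv (hV x) (fun t => hεQ _) hs
    rwa [dil_zero_mulVec, ← mul_div_cancel₀ ε two_ne_zero] at this
end

section
/- For a strictly monotone linear dilation d(s) = exp(sG) with respect to ‖x‖ = √(xᵀPx): e^{η̲s} ≤ ⌊d(s)⌋ ≤ ‖d(s)‖ ≤ e^{η̄s} for s ≥ 0 and e^{η̄s} ≤ ⌊d(s)⌋ ≤ ‖d(s)‖ ≤ e^{η̲s} for s ≤ 0, where η̄ = ½λ_max(P^{1/2}GP^{-1/2} + P^{-1/2}GᵀP^{1/2}) and η̲ = ½λ_min of the same matrix. -/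
open Matrix NormedSpace

section

open scoped ComplexOrder

/-- The positive semidefinite square root of a positive semidefinite matrix
(the definition `Matrix.PosSemidef.sqrt` of the older Mathlib, since removed). -/
noncomputable def Matrix.PosSemidef.sqrt {n : Type*} {𝕜 : Type*} [Fintype n] [RCLike 𝕜]
    [DecidableEq n] {A : Matrix n n 𝕜} (hA : A.PosSemidef) : Matrix n n 𝕜 :=
  hA.1.eigenvectorUnitary.1 * diagonal ((↑) ∘ (√·) ∘ hA.1.eigenvalues) *
  (star hA.1.eigenvectorUnitary : Matrix n n 𝕜)

end

/-- `‖d(s)‖ = sup_{‖u‖=1} ‖d(s)u‖` (operator "norm" w.r.t. the weighted norm). -/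
noncomputable def dsup {n : ℕ} (P G : Matrix (Fin n) (Fin n) ℝ) (s : ℝ) : ℝ :=
  sSup {r : ℝ | ∃ u : Fin n → ℝ, wnorm P u = 1 ∧ r = wnorm P (dil G s *ᵥ u)}

/-- `⌊d(s)⌋ = inf_{‖u‖=1} ‖d(s)u‖`. -/
noncomputable def dinf {n : ℕ} (P G : Matrix (Fin n) (Fin n) ℝ) (s : ℝ) : ℝ :=
  sInf {r : ℝ | ∃ u : Fin n → ℝ, wnorm P u = 1 ∧ r = wnorm P (dil G s *ᵥ u)}

/-!
With `Q = P^{1/2}` and `M = Q G Q⁻¹` we have `Q d(s) = exp (s M) Q`, so `‖d(s) u‖ = |exp (s M) v|`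
for `v = Q u`, in the Euclidean norm. Along `x(s) = exp (s M) v` the derivative of `|x|²` is
`xᵀ (M + Mᵀ) x`, which lies between `2η̲ |x|²` and `2η̄ |x|²`; a Grönwall argument gives
`e^{2η̲s} |v|² ≤ |x(s)|² ≤ e^{2η̄s} |v|²` for `s ≥ 0`, and the reverse for `s ≤ 0`.
Finally `η̲ > 0` because `M + Mᵀ = Q⁻¹ (P G + Gᵀ P) Q⁻¹` is positive definite.
-/

section ExpGrowth

variable {ι : Type*} [Fintype ι]

theorem HasDerivAt.dotProduct_s5 {f g : ℝ → ι → ℝ} {f' g' : ι → ℝ} {t : ℝ}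
    (hf : HasDerivAt f f' t) (hg : HasDerivAt g g' t) :
    HasDerivAt (fun s => f s ⬝ᵥ g s) (f' ⬝ᵥ g t + f t ⬝ᵥ g') t := by
  have h := HasDerivAt.fun_sum (u := Finset.univ)
    fun i _ => (hasDerivAt_pi.1 hf i).fun_mul (hasDerivAt_pi.1 hg i)
  rwa [Finset.sum_add_distrib] at h

variable [DecidableEq ι]

theorem hasDerivAt_exp_smul_mulVec (M : Matrix ι ι ℝ) (v : ι → ℝ) (t : ℝ) :
    HasDerivAt (fun s : ℝ => exp (s • M) *ᵥ v) (M *ᵥ (exp (t • M) *ᵥ v)) t := by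
  -- any normed algebra structure on matrices will do; the statement does not depend on it
  let : NormedRing (Matrix ι ι ℝ) := Matrix.linftyOpNormedRing
  let : NormedAlgebra ℝ (Matrix ι ι ℝ) := Matrix.linftyOpNormedAlgebra
  let applyVec : Matrix ι ι ℝ →L[ℝ] ι → ℝ := LinearMap.toContinuousLinearMap
    { toFun := (· *ᵥ v), map_add' := (add_mulVec · · v), map_smul' := (smul_mulVec · · v) }
  rw [mulVec_mulVec]
  exact applyVec.hasFDerivAt.comp_hasDerivAt t (hasDerivAt_exp_smul_const' M t)

theorem hasDerivAt_dotProduct_self_exp_smul_mulVec (M : Matrix ι ι ℝ) (v : ι → ℝ) (t : ℝ) :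
    HasDerivAt (fun s : ℝ => (exp (s • M) *ᵥ v) ⬝ᵥ (exp (s • M) *ᵥ v))
      (2 * ((exp (t • M) *ᵥ v) ⬝ᵥ M *ᵥ (exp (t • M) *ᵥ v))) t := by
  convert (hasDerivAt_exp_smul_mulVec M v t).dotProduct_s5 (hasDerivAt_exp_smul_mulVec M v t)
    using 1
  rw [dotProduct_comm (M *ᵥ _)]
  ring

theorem antitone_dotProduct_self_exp_smul_mulVec_mul_exp {M : Matrix ι ι ℝ} {c : ℝ}
    (hM : ∀ x, x ⬝ᵥ M *ᵥ x ≤ c * (x ⬝ᵥ x)) (v : ι → ℝ) :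
    Antitone fun s : ℝ => (exp (s • M) *ᵥ v) ⬝ᵥ (exp (s • M) *ᵥ v) * Real.exp (-(2 * c * s)) := by
  have hexp (t : ℝ) : HasDerivAt (fun s => Real.exp (-(2 * c * s)))
      (Real.exp (-(2 * c * t)) * -(2 * c)) t := by
    simpa using ((hasDerivAt_id t).const_mul (2 * c)).fun_neg.exp
  have hderiv (t : ℝ) := (hasDerivAt_dotProduct_self_exp_smul_mulVec M v t).fun_mul (hexp t)
  refine antitone_of_deriv_nonpos (fun t => (hderiv t).differentiableAt) fun t => ?_
  rw [(hderiv t).deriv]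
  set x := exp (t • M) *ᵥ v
  have hx := hM x
  have := Real.exp_pos (-(2 * c * t))
  nlinarith

theorem exp_mul_dotProduct_self_le_and_le {M : Matrix ι ι ℝ} {a b : ℝ}
    (ha : ∀ x, a * (x ⬝ᵥ x) ≤ x ⬝ᵥ M *ᵥ x) (hb : ∀ x, x ⬝ᵥ M *ᵥ x ≤ b * (x ⬝ᵥ x))
    (v : ι → ℝ) {s : ℝ} (hs : 0 ≤ s) :
    Real.exp (2 * a * s) * (v ⬝ᵥ v) ≤ (exp (s • M) *ᵥ v) ⬝ᵥ (exp (s • M) *ᵥ v) ∧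
      (exp (s • M) *ᵥ v) ⬝ᵥ (exp (s • M) *ᵥ v) ≤ Real.exp (2 * b * s) * (v ⬝ᵥ v) := by
  -- the lower bound is the upper bound for `-M`, run backwards in time
  have hneg : ∀ x, x ⬝ᵥ (-M) *ᵥ x ≤ -a * (x ⬝ᵥ x) := fun x => by
    simpa [neg_mulVec] using neg_le_neg (ha x)
  have hlow := antitone_dotProduct_self_exp_smul_mulVec_mul_exp hneg v (neg_nonpos.2 hs)
  have hup := antitone_dotProduct_self_exp_smul_mulVec_mul_exp hb v hs
  simp only [neg_smul_neg, zero_smul, exp_zero, one_mulVec, mul_zero, neg_zero,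
    Real.exp_zero, mul_one] at hlow hup
  rw [show -(2 * -a * -s) = -(2 * a * s) by ring] at hlow
  rw [Real.exp_neg, ← div_eq_mul_inv] at hlow hup
  rw [le_div_iff₀ (Real.exp_pos _)] at hlow
  rw [div_le_iff₀ (Real.exp_pos _)] at hup
  constructor <;> linarith

end ExpGrowth

section Spectrum

variable {ι : Type*} [Fintype ι] [DecidableEq ι]

theorem Matrix.IsHermitian.mul_dotProduct_self_le {A : Matrix ι ι ℝ} (hA : A.IsHermitian) {c : ℝ}
    (hc : ∀ μ ∈ spectrum ℝ A, c ≤ μ) (x : ι → ℝ) : c * (x ⬝ᵥ x) ≤ x ⬝ᵥ A *ᵥ x := by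
  have hpsd : (A - algebraMap ℝ _ c).PosSemidef := by
    refine posSemidef_iff_isHermitian_and_spectrum_nonneg.2
      ⟨hA.sub (by rw [algebraMap_eq_diagonal]; exact isHermitian_diagonal _), ?_⟩
    rw [← spectrum.sub_singleton_eq]
    rintro _ ⟨μ, hμ, _, rfl, rfl⟩
    exact sub_nonneg.2 (hc μ hμ)
  have := hpsd.dotProduct_mulVec_nonneg x
  simp only [Algebra.algebraMap_eq_smul_one, sub_mulVec, smul_mulVec, one_mulVec, star_trivial,
    dotProduct_sub, dotProduct_smul, smul_eq_mul] at this
  linarith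

theorem Matrix.IsHermitian.dotProduct_mulVec_le {A : Matrix ι ι ℝ} (hA : A.IsHermitian) {c : ℝ}
    (hc : ∀ μ ∈ spectrum ℝ A, μ ≤ c) (x : ι → ℝ) : x ⬝ᵥ A *ᵥ x ≤ c * (x ⬝ᵥ x) := by
  have := hA.neg.mul_dotProduct_self_le (c := -c) (fun μ hμ => ?_) x
  · simpa [neg_mulVec] using this
  rw [← spectrum.neg_eq] at hμ
  exact neg_le.1 (hc _ hμ)

theorem Matrix.PosDef.pos_of_mem_spectrum {A : Matrix ι ι ℝ} (hA : A.PosDef) {μ : ℝ}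
    (hμ : μ ∈ spectrum ℝ A) : 0 < μ := by
  obtain ⟨i, rfl⟩ := hA.1.spectrum_real_eq_range_eigenvalues ▸ hμ
  exact hA.eigenvalues_pos i

omit [DecidableEq ι] in
theorem dotProduct_mulVec_add_transpose (M : Matrix ι ι ℝ) (x : ι → ℝ) :
    x ⬝ᵥ (M + Mᵀ) *ᵥ x = 2 * (x ⬝ᵥ M *ᵥ x) := by
  rw [add_mulVec, dotProduct_add, dotProduct_mulVec x Mᵀ, vecMul_transpose, dotProduct_comm]
  ring

theorem mul_dotProduct_self_le_of_le_spectrum_add_transpose {M : Matrix ι ι ℝ} {a : ℝ}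
    (ha : ∀ μ ∈ spectrum ℝ (M + Mᵀ), 2 * a ≤ μ) (x : ι → ℝ) : a * (x ⬝ᵥ x) ≤ x ⬝ᵥ M *ᵥ x := by
  have hM : (M + Mᵀ).IsHermitian := by
    simpa only [conjTranspose_eq_transpose_of_trivial] using isHermitian_add_transpose_self M
  have := hM.mul_dotProduct_self_le ha x
  rw [dotProduct_mulVec_add_transpose] at this
  linarith

theorem dotProduct_mulVec_le_of_spectrum_add_transpose_le {M : Matrix ι ι ℝ} {b : ℝ}
    (hb : ∀ μ ∈ spectrum ℝ (M + Mᵀ), μ ≤ 2 * b) (x : ι → ℝ) : x ⬝ᵥ M *ᵥ x ≤ b * (x ⬝ᵥ x) := by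
  have hM : (M + Mᵀ).IsHermitian := by
    simpa only [conjTranspose_eq_transpose_of_trivial] using isHermitian_add_transpose_self M
  have := hM.dotProduct_mulVec_le hb x
  rw [dotProduct_mulVec_add_transpose] at this
  linarith

end Spectrum

section Sqrt

open scoped ComplexOrder

variable {ι 𝕜 : Type*} [Fintype ι] [DecidableEq ι] [RCLike 𝕜] {A : Matrix ι ι 𝕜}

theorem Matrix.PosSemidef.sqrt_eq_cfc (hA : A.PosSemidef) : hA.sqrt = cfc Real.sqrt A := by
  rw [hA.1.cfc_eq, IsHermitian.cfc, Unitary.conjStarAlgAut_apply]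
  rfl

theorem Matrix.PosSemidef.isHermitian_sqrt (hA : A.PosSemidef) : hA.sqrt.IsHermitian := by
  rw [hA.sqrt_eq_cfc]
  exact cfc_predicate _ _

theorem Matrix.PosSemidef.sqrt_mul_self (hA : A.PosSemidef) : hA.sqrt * hA.sqrt = A := by
  rw [hA.sqrt_eq_cfc, ← cfc_mul .., cfc_congr (g := fun x => x) fun x hx => ?_]
  · exact cfc_id' ℝ A hA.1
  obtain ⟨i, rfl⟩ := hA.1.spectrum_real_eq_range_eigenvalues ▸ hx
  exact Real.mul_self_sqrt (hA.eigenvalues_nonneg i)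

theorem Matrix.PosDef.isUnit_sqrt (hA : A.PosDef) : IsUnit hA.posSemidef.sqrt := by
  rw [isUnit_iff_isUnit_det]
  refine (IsUnit.mul_iff (y := hA.posSemidef.sqrt.det)).1 ?_ |>.1
  rw [← det_mul, hA.posSemidef.sqrt_mul_self]
  exact (isUnit_iff_isUnit_det A).1 hA.isUnit

end Sqrt

theorem Set.Nonempty.bounds_csInf_csSup_of_subset_Icc {α : Type*}
    [ConditionallyCompleteLattice α] {S : Set α} {a b : α} (hS : S.Nonempty) (h : S ⊆ Set.Icc a b) :
    a ≤ sInf S ∧ sInf S ≤ sSup S ∧ sSup S ≤ b :=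
  ⟨le_csInf hS fun _ hx => (h hx).1,
    csInf_le_csSup hS ⟨a, fun _ hx => (h hx).1⟩ ⟨b, fun _ hx => (h hx).2⟩,
    csSup_le hS fun _ hx => (h hx).2⟩

theorem Matrix.nonempty_of_mem_spectrum {ι R : Type*} [Fintype ι] [DecidableEq ι] [CommRing R]
    {A : Matrix ι ι R} {μ : R} (hμ : μ ∈ spectrum R A) : Nonempty ι := by
  by_contra h
  have := not_nonempty_iff.1 h
  simp [spectrum.of_subsingleton] at hμ

section Conjugation

variable {ι : Type*} [Fintype ι] [DecidableEq ι] {P G Q : Matrix ι ι ℝ}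

theorem transpose_conj_of_transpose_eq (hQT : Qᵀ = Q) : (Q * G * Q⁻¹)ᵀ = Q⁻¹ * Gᵀ * Q := by
  rw [transpose_mul, transpose_mul, transpose_nonsing_inv, hQT, mul_assoc]

theorem posDef_conj_add_transpose (hQT : Qᵀ = Q) (hQQ : Q * Q = P) (hQ : IsUnit Q)
    (hmon : (P * G + Gᵀ * P).PosDef) : (Q * G * Q⁻¹ + (Q * G * Q⁻¹)ᵀ).PosDef := by
  have hdet := (isUnit_iff_isUnit_det Q).1 hQ
  have := hmon.conjTranspose_mul_mul_same
    (mulVec_injective_iff_isUnit.2 (isUnit_nonsing_inv_iff.2 hQ))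
  convert this using 1
  rw [transpose_conj_of_transpose_eq hQT, conjTranspose_eq_transpose_of_trivial,
    transpose_nonsing_inv, hQT, ← hQQ]
  simp only [mul_add, add_mul, ← mul_assoc, nonsing_inv_mul _ hdet, one_mul]
  simp only [mul_assoc, mul_nonsing_inv _ hdet, mul_one]

end Conjugation

section Dilation

variable {n : ℕ} {P G Q : Matrix (Fin n) (Fin n) ℝ}

theorem wnorm_eq_sqrt_dotProduct (hQT : Qᵀ = Q) (hQQ : Q * Q = P) (x : Fin n → ℝ) :
    wnorm P x = √((Q *ᵥ x) ⬝ᵥ (Q *ᵥ x)) := by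
  rw [wnorm, ← hQQ, ← mulVec_mulVec, dotProduct_mulVec, ← mulVec_transpose, hQT]

theorem mulVec_dil (hQ : IsUnit Q) (s : ℝ) (x : Fin n → ℝ) :
    Q *ᵥ (dil G s *ᵥ x) = exp (s • (Q * G * Q⁻¹)) *ᵥ (Q *ᵥ x) := by
  rw [show s • (Q * G * Q⁻¹) = Q * (s • G) * Q⁻¹ by rw [Matrix.mul_smul, Matrix.smul_mul],
    exp_conj _ _ hQ, mulVec_mulVec, mulVec_mulVec, mul_assoc _ Q⁻¹,
    nonsing_inv_mul _ ((isUnit_iff_isUnit_det Q).1 hQ), mul_one, dil]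

theorem exists_wnorm_eq_one (hQT : Qᵀ = Q) (hQQ : Q * Q = P) (hQ : IsUnit Q) (i : Fin n) :
    ∃ u, wnorm P u = 1 := by
  refine ⟨Q⁻¹ *ᵥ Pi.single i 1, ?_⟩
  rw [wnorm_eq_sqrt_dotProduct hQT hQQ, mulVec_mulVec,
    mul_nonsing_inv _ ((isUnit_iff_isUnit_det Q).1 hQ), one_mulVec]
  simp

theorem wnorm_dil_mem_Icc {a b : ℝ} (hQT : Qᵀ = Q) (hQQ : Q * Q = P) (hQ : IsUnit Q)
    (ha : ∀ x, a * (x ⬝ᵥ x) ≤ x ⬝ᵥ (Q * G * Q⁻¹) *ᵥ x)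
    (hb : ∀ x, x ⬝ᵥ (Q * G * Q⁻¹) *ᵥ x ≤ b * (x ⬝ᵥ x))
    {u : Fin n → ℝ} (hu : wnorm P u = 1) {s : ℝ} (hs : 0 ≤ s) :
    wnorm P (dil G s *ᵥ u) ∈ Set.Icc (Real.exp (a * s)) (Real.exp (b * s)) := by
  rw [wnorm_eq_sqrt_dotProduct hQT hQQ, Real.sqrt_eq_one] at hu
  obtain ⟨hlow, hup⟩ := exp_mul_dotProduct_self_le_and_le ha hb (Q *ᵥ u) hs
  rw [hu, mul_one] at hlow hup
  have hsqrt (c : ℝ) : Real.exp (c * s) = √(Real.exp (2 * c * s)) := by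
    rw [← Real.exp_half]
    ring_nf
  rw [wnorm_eq_sqrt_dotProduct hQT hQQ, mulVec_dil hQ, hsqrt a, hsqrt b]
  exact ⟨Real.sqrt_le_sqrt hlow, Real.sqrt_le_sqrt hup⟩

theorem wnorm_dil_mem_Icc_of_nonpos {a b : ℝ} (hQT : Qᵀ = Q) (hQQ : Q * Q = P) (hQ : IsUnit Q)
    (ha : ∀ x, a * (x ⬝ᵥ x) ≤ x ⬝ᵥ (Q * G * Q⁻¹) *ᵥ x)
    (hb : ∀ x, x ⬝ᵥ (Q * G * Q⁻¹) *ᵥ x ≤ b * (x ⬝ᵥ x))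
    {u : Fin n → ℝ} (hu : wnorm P u = 1) {s : ℝ} (hs : s ≤ 0) :
    wnorm P (dil G s *ᵥ u) ∈ Set.Icc (Real.exp (b * s)) (Real.exp (a * s)) := by
  have hneg : Q * -G * Q⁻¹ = -(Q * G * Q⁻¹) := by noncomm_ring
  have := wnorm_dil_mem_Icc (G := -G) (a := -b) (b := -a) hQT hQQ hQ
    (fun x => by simpa [hneg, neg_mulVec] using hb x)
    (fun x => by simpa [hneg, neg_mulVec] using ha x) hu (neg_nonneg.2 hs)
  rwa [dil, neg_smul_neg, ← dil, neg_mul_neg, neg_mul_neg] at this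

theorem dinf_dsup_bounds {a b s : ℝ} (hne : ∃ u, wnorm P u = 1)
    (h : ∀ u, wnorm P u = 1 → wnorm P (dil G s *ᵥ u) ∈ Set.Icc a b) :
    a ≤ dinf P G s ∧ dinf P G s ≤ dsup P G s ∧ dsup P G s ≤ b := by
  obtain ⟨u, hu⟩ := hne
  refine Set.Nonempty.bounds_csInf_csSup_of_subset_Icc ⟨_, u, hu, rfl⟩ ?_
  rintro _ ⟨v, hv, rfl⟩
  exact h v hv

end Dilation

/-- with `2η̄ = λ_max(P^{1/2}GP^{-1/2} + P^{-1/2}GᵀP^{1/2})` and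
`2η̲ = λ_min` of the same matrix:
`e^{η̲s} ≤ ⌊d(s)⌋ ≤ ‖d(s)‖ ≤ e^{η̄s}` for `s ≥ 0`, and
`e^{η̄s} ≤ ⌊d(s)⌋ ≤ ‖d(s)‖ ≤ e^{η̲s}` for `s ≤ 0`. -/
theorem stmt5 {n : ℕ} (P G : Matrix (Fin n) (Fin n) ℝ) (hP : P.PosDef)
    (hmon : (P * G + Gᵀ * P).PosDef) (η₁ η₂ : ℝ)
    (hmax : IsGreatest (spectrum ℝ
      (hP.posSemidef.sqrt * G * (hP.posSemidef.sqrt)⁻¹ +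
        (hP.posSemidef.sqrt)⁻¹ * Gᵀ * hP.posSemidef.sqrt)) (2 * η₂))
    (hmin : IsLeast (spectrum ℝ
      (hP.posSemidef.sqrt * G * (hP.posSemidef.sqrt)⁻¹ +
        (hP.posSemidef.sqrt)⁻¹ * Gᵀ * hP.posSemidef.sqrt)) (2 * η₁)) :
    (0 < η₁ ∧ 0 < η₂) ∧
    (∀ s : ℝ, 0 ≤ s →
      Real.exp (η₁ * s) ≤ dinf P G s ∧ dinf P G s ≤ dsup P G s ∧
        dsup P G s ≤ Real.exp (η₂ * s)) ∧
    (∀ s : ℝ, s ≤ 0 →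
      Real.exp (η₂ * s) ≤ dinf P G s ∧ dinf P G s ≤ dsup P G s ∧
        dsup P G s ≤ Real.exp (η₁ * s)) := by
  set Q := hP.posSemidef.sqrt
  have hQT : Qᵀ = Q := by
    simpa only [IsHermitian, conjTranspose_eq_transpose_of_trivial]
      using hP.posSemidef.isHermitian_sqrt
  have hQQ : Q * Q = P := hP.posSemidef.sqrt_mul_self
  have hQ : IsUnit Q := hP.isUnit_sqrt
  rw [← transpose_conj_of_transpose_eq hQT] at hmax hmin
  have hlow := mul_dotProduct_self_le_of_le_spectrum_add_transpose fun μ hμ => hmin.2 hμ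
  have hup := dotProduct_mulVec_le_of_spectrum_add_transpose_le fun μ hμ => hmax.2 hμ
  have hη₁ : 0 < η₁ := by
    linarith [(posDef_conj_add_transpose hQT hQQ hQ hmon).pos_of_mem_spectrum hmin.1]
  have hη₁₂ : η₁ ≤ η₂ := by linarith [hmax.2 hmin.1]
  obtain ⟨i⟩ := nonempty_of_mem_spectrum hmin.1
  have hne := exists_wnorm_eq_one hQT hQQ hQ i
  exact ⟨⟨hη₁, hη₁.trans_le hη₁₂⟩,
    fun s hs => dinf_dsup_bounds hne fun u hu => wnorm_dil_mem_Icc hQT hQQ hQ hlow hup hu hs,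
    fun s hs => dinf_dsup_bounds hne fun u hu =>
      wnorm_dil_mem_Icc_of_nonpos hQT hQQ hQ hlow hup hu hs⟩
end

section
/- Let G_d = ΓΛΓ⁻¹ with Λ diagonal having strictly positive diagonal entries. For any 0 < ε < 1 there exists δ > 0 such that for all z, y ∈ ℝⁿ: if |ξ_{z,i}| ≤ δ|ξ_{y,i}| for all i = 1,…,n (where ξ_z = Γ⁻¹z, ξ_y = Γ⁻¹y), then ‖z‖_d ≤ ε‖y‖_d. -/
open Matrix NormedSpace

/-!
In the eigen-coordinates `ξ = Γ⁻¹ x` the dilation acts diagonally, `d(s) x = Γ (e^{sλᵢ} ξᵢ)ᵢ`,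
so `‖d(s) x‖² = Q (e^{sλᵢ} ξᵢ)ᵢ` for the positive definite form `Q = Γᵀ P Γ`, and the
normalized vectors `(‖x‖_d^{-λᵢ} ξ_{x,i})ᵢ` all satisfy `Q = 1`. Being continuous and
2-homogeneous, `Q` is squeezed between two multiples of the squared sup norm, hence at least
halves when its argument is dominated coordinatewise by a small enough factor `c`. Take
`δ = c ε^{Σ λᵢ}`. If `‖z‖_d > ε ‖y‖_d`, then, all `λᵢ` being positive, the normalized vector of
`z` is dominated by `c` times that of `y`, so `1 ≤ 1/2`.
-/

section Homogeneous

variable {E : Type*} [NormedAddCommGroup E] [NormedSpace ℝ E] {f : E → ℝ}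

lemma eq_sq_norm_mul_inv_norm_smul (hhom : ∀ (t : ℝ) (x : E), f (t • x) = t ^ 2 * f x) (x : E) :
    f x = ‖x‖ ^ 2 * f (‖x‖⁻¹ • x) := by
  rcases eq_or_ne x 0 with rfl | hx
  · simpa using hhom 0 0
  rw [← hhom, smul_inv_smul₀ (norm_ne_zero_iff.2 hx)]

variable [ProperSpace E]

lemma exists_pos_mul_sq_norm_le (hf : Continuous f)
    (hhom : ∀ (t : ℝ) (x : E), f (t • x) = t ^ 2 * f x) (hpos : ∀ x, x ≠ 0 → 0 < f x) :
    ∃ m > 0, ∀ x, m * ‖x‖ ^ 2 ≤ f x := by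
  rcases (Metric.sphere (0 : E) 1).eq_empty_or_nonempty with hempty | hne
  · refine ⟨1, one_pos, fun x => ?_⟩
    rcases eq_or_ne x 0 with rfl | hx
    · simpa using (hhom 0 0).ge
    · have : ‖x‖⁻¹ • x ∈ Metric.sphere (0 : E) 1 := by
        simp [norm_smul, hx]
      simp [hempty] at this
  obtain ⟨u, hu, hmin⟩ := (isCompact_sphere 0 1).exists_isMinOn hne hf.continuousOn
  have hu0 : u ≠ 0 := ne_zero_of_mem_unit_sphere ⟨u, hu⟩
  refine ⟨f u, hpos u hu0, fun x => ?_⟩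
  rw [eq_sq_norm_mul_inv_norm_smul hhom x, mul_comm]
  rcases eq_or_ne x 0 with rfl | hx
  · simp
  refine mul_le_mul_of_nonneg_left (hmin ?_) (by positivity)
  simp [norm_smul, hx]

lemma exists_nonneg_le_mul_sq_norm (hf : Continuous f)
    (hhom : ∀ (t : ℝ) (x : E), f (t • x) = t ^ 2 * f x) :
    ∃ C ≥ 0, ∀ x, f x ≤ C * ‖x‖ ^ 2 := by
  obtain ⟨C, hC⟩ := (isCompact_sphere (0 : E) 1).exists_bound_of_continuousOn hf.continuousOn
  refine ⟨max C 0, le_max_right _ _, fun x => ?_⟩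
  rw [eq_sq_norm_mul_inv_norm_smul hhom x, mul_comm]
  rcases eq_or_ne x 0 with rfl | hx
  · simp
  refine mul_le_mul_of_nonneg_right ?_ (by positivity)
  have := hC (‖x‖⁻¹ • x) (by simp [norm_smul, hx])
  exact (le_abs_self _).trans (this.trans (le_max_left _ _))

lemma exists_pos_two_mul_le_of_norm_le (hf : Continuous f)
    (hhom : ∀ (t : ℝ) (x : E), f (t • x) = t ^ 2 * f x) (hpos : ∀ x, x ≠ 0 → 0 < f x) :
    ∃ c > 0, ∀ x y : E, ‖x‖ ≤ c * ‖y‖ → 2 * f x ≤ f y := by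
  obtain ⟨m, hm, hlow⟩ := exists_pos_mul_sq_norm_le hf hhom hpos
  obtain ⟨C, hC, hup⟩ := exists_nonneg_le_mul_sq_norm hf hhom
  have hc : 2 * C * (Real.sqrt (m / (2 * C + 1))) ^ 2 ≤ m := by
    rw [Real.sq_sqrt (by positivity), ← mul_div_assoc, div_le_iff₀ (by positivity)]
    nlinarith
  refine ⟨Real.sqrt (m / (2 * C + 1)), by positivity, fun x y hxy => ?_⟩
  calc 2 * f x ≤ 2 * C * ‖x‖ ^ 2 := by linarith [hup x]
    _ ≤ 2 * C * (Real.sqrt (m / (2 * C + 1)) * ‖y‖) ^ 2 := by gcongr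
    _ ≤ m * ‖y‖ ^ 2 := by rw [mul_pow, ← mul_assoc]; gcongr
    _ ≤ f y := hlow y

end Homogeneous

section Matrix

variable {ι : Type*} [Fintype ι]

lemma continuous_dotProduct_mulVec_self (M : Matrix ι ι ℝ) :
    Continuous fun x : ι → ℝ => x ⬝ᵥ M *ᵥ x :=
  continuous_id.dotProduct (continuous_const.matrix_mulVec continuous_id)

lemma smul_dotProduct_mulVec_smul (M : Matrix ι ι ℝ) (t : ℝ) (x : ι → ℝ) :
    t • x ⬝ᵥ M *ᵥ (t • x) = t ^ 2 * (x ⬝ᵥ M *ᵥ x) := by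
  rw [mulVec_smul, smul_dotProduct, dotProduct_smul, smul_eq_mul, smul_eq_mul]
  ring

lemma mulVec_dotProduct_mulVec_mulVec (P Γ : Matrix ι ι ℝ) (u : ι → ℝ) :
    Γ *ᵥ u ⬝ᵥ P *ᵥ (Γ *ᵥ u) = u ⬝ᵥ (Γᵀ * P * Γ) *ᵥ u := by
  rw [← mulVec_mulVec, ← mulVec_mulVec, dotProduct_mulVec u, vecMul_transpose,
    dotProduct_mulVec (Γ *ᵥ u)]

lemma Matrix.PosDef.transpose_mul_mul_same {P Γ : Matrix ι ι ℝ} [DecidableEq ι] (hP : P.PosDef)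
    (hΓ : IsUnit Γ.det) : (Γᵀ * P * Γ).PosDef := by
  simpa using hP.conjTranspose_mul_mul_same
    (mulVec_injective_of_isUnit ((isUnit_iff_isUnit_det Γ).2 hΓ))

noncomputable def diagonalDil (d : ι → ℝ) (s : ℝ) (ξ : ι → ℝ) : ι → ℝ :=
  fun i => Real.exp (s * d i) * ξ i

lemma norm_diagonalDil_le_of_abs_le {d : ι → ℝ} (hd : ∀ i, 0 ≤ d i) {ε Y t c : ℝ}
    (hε0 : 0 < ε) (hε1 : ε < 1) (hY : 0 < Y) (ht : ε * Y < t) (hc : 0 ≤ c)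
    {ζ ξ : ι → ℝ} (h : ∀ i, |ζ i| ≤ c * Real.exp (Real.log ε * ∑ j, d j) * |ξ i|) :
    ‖diagonalDil d (-Real.log t) ζ‖ ≤ c * ‖diagonalDil d (-Real.log Y) ξ‖ := by
  refine (pi_norm_le_iff_of_nonneg (by positivity)).2 fun i => ?_
  have hlog : Real.log ε + Real.log Y < Real.log t := by
    rw [← Real.log_mul hε0.ne' hY.ne']
    exact Real.log_lt_log (by positivity) ht
  have hdi : d i ≤ ∑ j, d j := Finset.single_le_sum (fun j _ => hd j) (Finset.mem_univ i)
  have hexp : Real.exp (-Real.log t * d i) * Real.exp (Real.log ε * ∑ j, d j)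
      ≤ Real.exp (-Real.log Y * d i) := by
    rw [← Real.exp_add, Real.exp_le_exp]
    nlinarith [Real.log_neg hε0 hε1, hd i]
  calc ‖diagonalDil d (-Real.log t) ζ i‖ = Real.exp (-Real.log t * d i) * |ζ i| := by
        simp [diagonalDil]
    _ ≤ Real.exp (-Real.log t * d i) * (c * Real.exp (Real.log ε * ∑ j, d j) * |ξ i|) := by
        gcongr; exact h i
    _ = c * (Real.exp (-Real.log t * d i) * Real.exp (Real.log ε * ∑ j, d j) * |ξ i|) := by
        ring
    _ ≤ c * (Real.exp (-Real.log Y * d i) * |ξ i|) := by gcongr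
    _ = c * ‖diagonalDil d (-Real.log Y) ξ i‖ := by simp [diagonalDil]
    _ ≤ c * ‖diagonalDil d (-Real.log Y) ξ‖ := by gcongr; exact norm_le_pi_norm _ i

end Matrix

lemma dil_conj_diagonal_mulVec {n : ℕ} {Γ : Matrix (Fin n) (Fin n) ℝ} (hΓ : IsUnit Γ.det)
    (d : Fin n → ℝ) (s : ℝ) (x : Fin n → ℝ) :
    dil (Γ * diagonal d * Γ⁻¹) s *ᵥ x = Γ *ᵥ diagonalDil d s (Γ⁻¹ *ᵥ x) := by
  have : s • (Γ * diagonal d * Γ⁻¹) = Γ * diagonal (s • d) * Γ⁻¹ := by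
    rw [diagonal_smul, Matrix.mul_smul, Matrix.smul_mul]
  rw [dil, this, Matrix.exp_conj _ _ ((isUnit_iff_isUnit_det Γ).2 hΓ), Matrix.exp_diagonal,
    ← mulVec_mulVec, ← mulVec_mulVec]
  congr 1
  ext i
  simp [diagonalDil, mulVec_diagonal, ← Real.exp_eq_exp_ℝ]

theorem stmt8_general {n : ℕ} (P Gd Γ Λ : Matrix (Fin n) (Fin n) ℝ) (hP : P.PosDef)
    (hΓ : IsUnit Γ.det) (hfac : Gd = Γ * Λ * Γ⁻¹)
    (hΛdiag : ∀ i j : Fin n, i ≠ j → Λ i j = 0) (hΛpos : ∀ i : Fin n, 0 < Λ i i)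
    (hnd : (Fin n → ℝ) → ℝ) (hnd0 : hnd 0 = 0)
    (hndpos : ∀ x : Fin n → ℝ, x ≠ 0 → 0 < hnd x)
    (hnddef : ∀ x : Fin n → ℝ, x ≠ 0 → wnorm P (dil Gd (-(Real.log (hnd x))) *ᵥ x) = 1) :
    ∀ ε : ℝ, 0 < ε → ε < 1 → ∃ δ : ℝ, 0 < δ ∧ ∀ z y : Fin n → ℝ,
      (∀ i : Fin n, |(Γ⁻¹ *ᵥ z) i| ≤ δ * |(Γ⁻¹ *ᵥ y) i|) → hnd z ≤ ε * hnd y := by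
  intro ε hε0 hε1
  set d := Λ.diag
  have hGd : Gd = Γ * diagonal d * Γ⁻¹ := by
    rw [hfac, (show Λ.IsDiag from hΛdiag).diagonal_diag]
  set M := Γᵀ * P * Γ
  have hM : M.PosDef := hP.transpose_mul_mul_same hΓ
  obtain ⟨c, hc0, hc⟩ := exists_pos_two_mul_le_of_norm_le (continuous_dotProduct_mulVec_self M)
    (smul_dotProduct_mulVec_smul M) fun x hx => hM.dotProduct_mulVec_pos hx
  have hnormalized : ∀ x, x ≠ 0 → diagonalDil d (-Real.log (hnd x)) (Γ⁻¹ *ᵥ x) ⬝ᵥ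
      M *ᵥ diagonalDil d (-Real.log (hnd x)) (Γ⁻¹ *ᵥ x) = 1 := by
    intro x hx
    have := hnddef x hx
    rwa [wnorm, Real.sqrt_eq_one, hGd, dil_conj_diagonal_mulVec hΓ,
      mulVec_dotProduct_mulVec_mulVec] at this
  refine ⟨c * Real.exp (Real.log ε * ∑ i, d i), by positivity, fun z y hzy => ?_⟩
  rcases eq_or_ne z 0 with rfl | hz
  · rw [hnd0]
    rcases eq_or_ne y 0 with rfl | hy
    · simp [hnd0]
    · exact (mul_pos hε0 (hndpos y hy)).le
  have hy : y ≠ 0 := by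
    rintro rfl
    have hξ : Γ⁻¹ *ᵥ z = Γ⁻¹ *ᵥ 0 := by
      ext i
      simpa using hzy i
    exact hz (mulVec_injective_of_isUnit
      ((isUnit_iff_isUnit_det _).2 (isUnit_nonsing_inv_det Γ hΓ)) hξ)
  by_contra! hlt
  have := hc _ _ (norm_diagonalDil_le_of_abs_le (d := d) (fun i => (hΛpos i).le) hε0 hε1
    (hndpos y hy) hlt hc0.le hzy)
  rw [hnormalized z hz, hnormalized y hy] at this
  norm_num at this

/-- Lemma 1: `G_d = ΓΛΓ⁻¹`, `Λ` diagonal with positive entries. For any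
`0 < ε < 1` there is `δ > 0` such that `|ξ_{z,i}| ≤ δ|ξ_{y,i}|` for all `i` (with
`ξ_z = Γ⁻¹z`, `ξ_y = Γ⁻¹y`) implies `‖z‖_d ≤ ε‖y‖_d`. -/
theorem stmt8 {n : ℕ} (P Gd Γ Λ : Matrix (Fin n) (Fin n) ℝ) (hP : P.PosDef)
    (hmon : (P * Gd + Gdᵀ * P).PosDef)
    (hΓ : IsUnit Γ.det) (hfac : Gd = Γ * Λ * Γ⁻¹)
    (hΛdiag : ∀ i j : Fin n, i ≠ j → Λ i j = 0) (hΛpos : ∀ i : Fin n, 0 < Λ i i)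
    (hnd : (Fin n → ℝ) → ℝ) (hnd0 : hnd 0 = 0)
    (hndpos : ∀ x : Fin n → ℝ, x ≠ 0 → 0 < hnd x)
    (hnddef : ∀ x : Fin n → ℝ, x ≠ 0 → wnorm P (dil Gd (-(Real.log (hnd x))) *ᵥ x) = 1) :
    ∀ ε : ℝ, 0 < ε → ε < 1 → ∃ δ : ℝ, 0 < δ ∧ ∀ z y : Fin n → ℝ,
      (∀ i : Fin n, |(Γ⁻¹ *ᵥ z) i| ≤ δ * |(Γ⁻¹ *ᵥ y) i|) → hnd z ≤ ε * hnd y :=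
  stmt8_general P Gd Γ Λ hP hΓ hfac hΛdiag hΛpos hnd hnd0 hndpos hnddef
end

section
/- If A G_d = (μI + G_d)A for some μ ≠ 0 and some anti-Hurwitz matrix G_d (generator of a dilation), then A is nilpotent. -/
/-!
Over `ℂ`, the relation `A G = (μ + G) A` says that `A` maps the generalized eigenspace of `G`
for `λ` into the one for `λ - μ`, so `A ^ m` maps it into the one for `λ - m μ`. As `G` has
finitely many eigenvalues and `μ ≠ 0`, that space is zero for some `m`; since the generalized
eigenspaces span the whole space, `A` is locally nilpotent, hence nilpotent.
-/

namespace Module.End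

section CommRing

variable {R M : Type*} [CommRing R] [AddCommGroup M] [Module R M]

lemma mapsTo_maxGenEigenspace_of_semiconjBy {a f f' : End R M} (h : SemiconjBy a f f') (c : R) :
    Set.MapsTo a (f.maxGenEigenspace c) (f'.maxGenEigenspace c) := by
  intro v hv
  obtain ⟨k, hk⟩ := (mem_maxGenEigenspace f c v).mp hv
  have hc : SemiconjBy a (f - c • 1) (f' - c • 1) :=
    h.sub_right ((Commute.one_right a).smul_right c)
  refine (mem_maxGenEigenspace f' c (a v)).mpr ⟨k, ?_⟩
  rw [← mul_apply, ← (hc.pow_right k).eq, mul_apply, hk, map_zero]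

lemma maxGenEigenspace_smul_one_add (f : End R M) (μ c : R) :
    (μ • 1 + f).maxGenEigenspace c = f.maxGenEigenspace (c - μ) := by
  ext v
  rw [mem_maxGenEigenspace, mem_maxGenEigenspace,
    show μ • 1 + f - c • 1 = f - (c - μ) • 1 by rw [sub_smul]; abel]

lemma pow_mapsTo_maxGenEigenspace_sub_nsmul {a g : End R M} {μ : R}
    (h : a * g = (μ • 1 + g) * a) (m : ℕ) (c : R) :
    Set.MapsTo (a ^ m) (g.maxGenEigenspace c) (g.maxGenEigenspace (c - m • μ)) := by
  induction m with
  | zero => intro v hv; simpa using hv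
  | succ m ih =>
    have step := mapsTo_maxGenEigenspace_of_semiconjBy h (c - m • μ)
    rw [maxGenEigenspace_smul_one_add, sub_sub, ← succ_nsmul] at step
    rw [pow_succ']
    exact step.comp ih

end CommRing

variable {K V : Type*} [Field K] [AddCommGroup V] [Module K V] [FiniteDimensional K V]

lemma exists_maxGenEigenspace_sub_nsmul_eq_bot [CharZero K] (f : End K V) {μ : K} (hμ : μ ≠ 0)
    (c : K) : ∃ m : ℕ, f.maxGenEigenspace (c - m • μ) = ⊥ := by
  by_contra! hne
  refine Set.not_infinite.mpr
    (Submodule.finite_ne_bot_of_iSupIndep f.independent_maxGenEigenspace)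
    (Set.infinite_of_injective_forall_mem (f := fun m : ℕ ↦ c - m • μ) ?_ hne)
  intro m m' hmm'
  simpa [hμ] using hmm'

lemma isNilpotent_of_mul_eq_smul_one_add_mul [CharZero K] [IsAlgClosed K] {a g : End K V} {μ : K}
    (hμ : μ ≠ 0) (h : a * g = (μ • 1 + g) * a) : IsNilpotent a := by
  refine isNilpotent_iff_of_finite.mpr fun v ↦ ?_
  have hv : v ∈ ⨆ c, g.maxGenEigenspace c := by simp [iSup_maxGenEigenspace_eq_top]
  induction hv using Submodule.iSup_induction' with
  | zero => exact ⟨0, map_zero _⟩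
  | mem c v hv =>
    obtain ⟨m, hm⟩ := g.exists_maxGenEigenspace_sub_nsmul_eq_bot hμ c
    have hmem := pow_mapsTo_maxGenEigenspace_sub_nsmul h m c hv
    exact ⟨m, by rwa [hm, SetLike.mem_coe, Submodule.mem_bot] at hmem⟩
  | add v w _ _ hv hw =>
    obtain ⟨k, hk⟩ := hv
    obtain ⟨l, hl⟩ := hw
    refine ⟨max k l, ?_⟩
    rw [map_add, pow_map_zero_of_le le_sup_left hk, pow_map_zero_of_le le_sup_right hl, add_zero]

end Module.End

theorem stmt10_general {n : ℕ} (A Gd : Matrix (Fin n) (Fin n) ℝ) (μ : ℝ) (hμ : μ ≠ 0)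
    (h : A * Gd = (μ • (1 : Matrix (Fin n) (Fin n) ℝ) + Gd) * A) :
    IsNilpotent A := by
  let ψ : Matrix (Fin n) (Fin n) ℝ →ₐ[ℝ] Module.End ℂ (Fin n → ℂ) :=
    (Matrix.toLinAlgEquiv'.toAlgHom.restrictScalars ℝ).comp (Algebra.ofId ℝ ℂ).mapMatrix
  have hψ : Function.Injective ψ :=
    Matrix.toLinAlgEquiv'.injective.comp (Matrix.map_injective Complex.ofReal_injective)
  rw [← IsNilpotent.map_iff hψ]
  refine Module.End.isNilpotent_of_mul_eq_smul_one_add_mul (g := ψ Gd)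
    (Complex.ofReal_ne_zero.mpr hμ) ?_
  have hψμ : ψ (μ • 1) = (μ : ℂ) • 1 := by
    rw [map_smul, map_one]
    exact (algebraMap_smul ℂ μ (1 : Module.End ℂ (Fin n → ℂ))).symm
  simpa [hψμ] using congrArg ψ h

/-- if `A G_d = (μI + G_d) A` for some `μ ≠ 0` and some anti-Hurwitz
matrix `G_d`, then `A` is nilpotent. -/
theorem stmt10 {n : ℕ} (A Gd : Matrix (Fin n) (Fin n) ℝ) (μ : ℝ) (hμ : μ ≠ 0)
    (hG : ∀ z ∈ spectrum ℂ (Gd.map Complex.ofReal), 0 < z.re)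
    (h : A * Gd = (μ • (1 : Matrix (Fin n) (Fin n) ℝ) + Gd) * A) :
    IsNilpotent A :=
  stmt10_general A Gd μ hμ h
end

section
/- If the matrix equations A G₀ + B Y₀ = G₀ A + A and G₀ B = 0 hold, and K₀ = Y₀(G₀ - I)⁻¹ with G₀ - I invertible, then with A₀ = A + BK₀ and G_d = I + μG₀: A₀ d(s) = e^{μs} d(s) A₀ and d(s)B = e^s B for all s ∈ ℝ, where d(s) = exp(sG_d). -/
/-!
The closed-loop matrix `A₀ = A + B K₀` satisfies `A₀ G₀ = (G₀ + 1) A₀`: since `K₀ (G₀ - 1) = Y₀`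
we get `B K₀ G₀ = B Y₀ + B K₀`, and `G₀ B K₀ = 0`. Hence `A₀ G_d = (G_d + μ) A₀` and `G_d B = B`.
An intertwining `X P = P Y` (with `P` possibly rectangular) passes termwise to the exponential
series, `exp X * P = P * exp Y`, and this turns both relations into the dilation identities.
-/

open Matrix NormedSpace

namespace Matrix

section Exp

variable {𝕂 : Type*} [RCLike 𝕂] {m n : Type*} [Fintype m] [DecidableEq m] [Fintype n]
  [DecidableEq n]

open scoped Nat Norms.Operator in
theorem exp_mul_eq_mul_exp_of_mul_eq {X : Matrix m m 𝕂} {Y : Matrix n n 𝕂} {P : Matrix m n 𝕂}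
    (h : X * P = P * Y) : exp X * P = P * exp Y := by
  have hpow (k : ℕ) : X ^ k * P = P * Y ^ k := by
    induction k with
    | zero => simp
    | succ k ih => rw [pow_succ, pow_succ, Matrix.mul_assoc, h, ← Matrix.mul_assoc, ih,
        Matrix.mul_assoc]
  simp only [exp_eq_tsum 𝕂]
  calc (∑' k : ℕ, (k ! : 𝕂)⁻¹ • X ^ k) * P = ∑' k : ℕ, ((k ! : 𝕂)⁻¹ • X ^ k) * P :=
        (mulRightLinearMap m 𝕂 P).toContinuousLinearMap.map_tsum (expSeries_summable' X)
    _ = ∑' k : ℕ, P * ((k ! : 𝕂)⁻¹ • Y ^ k) := by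
        simp only [Matrix.smul_mul, Matrix.mul_smul, hpow]
    _ = P * ∑' k : ℕ, (k ! : 𝕂)⁻¹ • Y ^ k :=
        ((mulLeftLinearMap n 𝕂 P).toContinuousLinearMap.map_tsum (expSeries_summable' Y)).symm

theorem exp_smul_one (c : 𝕂) : exp (c • (1 : Matrix n n 𝕂)) = exp c • 1 := by
  simp [smul_one_eq_diagonal, exp_diagonal, Pi.exp_def]

end Exp

theorem add_mul_mul_eq_of_mul_sub_one_eq {R n l : Type*} [CommRing R] [Fintype n]
    [DecidableEq n] [Fintype l] {A G : Matrix n n R} {B : Matrix n l R} {Y K : Matrix l n R}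
    (h₁ : A * G + B * Y = G * A + A) (h₂ : G * B = 0) (hK : K * (G - 1) = Y) :
    (A + B * K) * G = (G + 1) * (A + B * K) := by
  have hBK : B * K * G = B * Y + B * K := by
    rw [← hK, Matrix.mul_sub, Matrix.mul_sub, Matrix.mul_one, Matrix.mul_assoc, sub_add_cancel]
  have hGBK : G * (B * K) = 0 := by rw [← Matrix.mul_assoc, h₂, Matrix.zero_mul]
  rw [Matrix.add_mul, hBK, ← add_assoc, h₁, Matrix.add_mul, Matrix.mul_add, hGBK,
    Matrix.one_mul, add_zero]
  abel

end Matrix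

section Dilation

variable {n : ℕ} {G : Matrix (Fin n) (Fin n) ℝ} {c : ℝ}

theorem mul_dil_of_mul_eq {P : Matrix (Fin n) (Fin n) ℝ} (h : P * G = (G + c • 1) * P)
    (s : ℝ) : P * dil G s = Real.exp (c * s) • (dil G s * P) := by
  have hsG : (s • G + (c * s) • 1) * P = P * (s • G) := by
    rw [Matrix.mul_smul, h, Matrix.add_mul, Matrix.add_mul, Matrix.smul_mul, Matrix.smul_mul,
      smul_add, Matrix.smul_mul, smul_smul, mul_comm s c]
  have hcomm : Commute (s • G) ((c * s) • (1 : Matrix (Fin n) (Fin n) ℝ)) :=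
    (Commute.one_right _).smul_right _
  rw [dil, ← exp_mul_eq_mul_exp_of_mul_eq hsG, exp_add_of_commute _ _ hcomm, exp_smul_one,
    Real.exp_eq_exp_ℝ, Matrix.mul_smul, Matrix.mul_one, Matrix.smul_mul]

theorem dil_mul_of_mul_eq_smul {l : Type*} [Fintype l] [DecidableEq l] {P : Matrix (Fin n) l ℝ}
    (h : G * P = c • P) (s : ℝ) : dil G s * P = Real.exp (c * s) • P := by
  have hsG : (s • G) * P = P * ((c * s) • (1 : Matrix l l ℝ)) := by
    rw [Matrix.smul_mul, h, Matrix.mul_smul, Matrix.mul_one, smul_smul, mul_comm s c]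
  rw [dil, exp_mul_eq_mul_exp_of_mul_eq hsG, exp_smul_one, Real.exp_eq_exp_ℝ, Matrix.mul_smul,
    Matrix.mul_one]

end Dilation

/-- if `AG₀ + BY₀ = G₀A + A` and `G₀B = 0`, with `K₀ = Y₀(G₀ - I)⁻¹`
(`G₀ - I` invertible), `A₀ = A + BK₀` and `G_d = I + μG₀`, then
`A₀ d(s) = e^{μs} d(s) A₀` and `d(s)B = e^s B` for all `s`. -/
theorem stmt16 {n m : ℕ} (A G₀ : Matrix (Fin n) (Fin n) ℝ)
    (B : Matrix (Fin n) (Fin m) ℝ) (Y₀ : Matrix (Fin m) (Fin n) ℝ) (μ : ℝ)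
    (h1 : A * G₀ + B * Y₀ = G₀ * A + A) (h2 : G₀ * B = 0)
    (hinv : IsUnit (G₀ - 1)) :
    ∀ s : ℝ,
      (A + B * (Y₀ * (G₀ - 1)⁻¹)) * dil (1 + μ • G₀) s =
        Real.exp (μ * s) • (dil (1 + μ • G₀) s * (A + B * (Y₀ * (G₀ - 1)⁻¹))) ∧
      dil (1 + μ • G₀) s * B = Real.exp s • B := by
  set A₀ := A + B * (Y₀ * (G₀ - 1)⁻¹)
  have hK : Y₀ * (G₀ - 1)⁻¹ * (G₀ - 1) = Y₀ :=
    nonsing_inv_mul_cancel_right _ _ ((isUnit_iff_isUnit_det _).mp hinv)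
  have hA₀ : A₀ * G₀ = (G₀ + 1) * A₀ := add_mul_mul_eq_of_mul_sub_one_eq h1 h2 hK
  clear_value A₀
  have hA₀d : A₀ * (1 + μ • G₀) = ((1 + μ • G₀) + μ • 1) * A₀ := by
    simp only [Matrix.mul_add, Matrix.add_mul, Matrix.mul_smul, Matrix.smul_mul, hA₀,
      Matrix.one_mul, Matrix.mul_one, smul_add]
    abel
  have hBd : (1 + μ • G₀) * B = (1 : ℝ) • B := by
    rw [Matrix.add_mul, Matrix.smul_mul, h2, smul_zero, add_zero, Matrix.one_mul, one_smul]
  intro s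
  exact ⟨mul_dil_of_mul_eq hA₀d s, by simpa using dil_mul_of_mul_eq_smul hBd s⟩
end

section
/- Suppose a continuous function V : ℝⁿ → ℝ≥0 is positive definite, radially unbounded, and its trajectories satisfy dV/dt ≤ -c·V^{1+μ} with c > 0 and μ < 0 along solutions. Then every solution reaches the origin in finite time, with settling time T(x₀) ≤ V(x₀)^{-μ}/(c·(-μ)). -/
open Set

/-! Along `V > 0` the quantity `W = V ^ (-μ)` satisfies `W' = -μ V^(-μ-1) V' ≤ -c (-μ)`, so
`W + c (-μ) t` is nonincreasing. If `V t > 0`, let `s` be the last time in `[0, t]` that is `0` or a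
zero of `V`; on `[s, t]` this gives `W t + c (-μ) t ≤ W s + c (-μ) s ≤ c (-μ) t`, forcing `W t ≤ 0`. -/

theorem exists_left_or_zero_and_ne_zero_on_Ioc {f : ℝ → ℝ} {a b : ℝ} (hab : a ≤ b)
    (hf : ContinuousOn f (Icc a b)) :
    ∃ s ∈ Icc a b, (s = a ∨ f s = 0) ∧ ∀ u ∈ Ioc s b, f u ≠ 0 := by
  set S := Icc a b ∩ {u | u = a ∨ f u = 0}
  have hS : S = Icc a b ∩ ({a} ∪ f ⁻¹' {0}) := rfl
  have hclosed : IsClosed S := by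
    rw [hS, inter_union_distrib_left]
    exact (isClosed_Icc.inter isClosed_singleton).union
      (hf.preimage_isClosed_of_isClosed isClosed_Icc isClosed_singleton)
  have hne : S.Nonempty := ⟨a, left_mem_Icc.2 hab, Or.inl rfl⟩
  have hbdd : BddAbove S := ⟨b, fun u hu => hu.1.2⟩
  obtain ⟨hs_mem, hs_zero⟩ := hclosed.csSup_mem hne hbdd
  refine ⟨sSup S, hs_mem, hs_zero, fun u hu hfu => ?_⟩
  have hu_mem : u ∈ S := ⟨⟨hs_mem.1.trans hu.1.le, hu.2⟩, Or.inr hfu⟩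
  exact (le_csSup hbdd hu_mem).not_gt hu.1

theorem deriv_mul_rpow_le_of_deriv_le {c μ v v' : ℝ} (hμ : μ < 0) (hv : 0 < v)
    (hle : v' ≤ -c * v ^ (1 + μ)) :
    v' * -μ * v ^ (-μ - 1) ≤ -(c * -μ) := by
  have hscale : 0 ≤ -μ * v ^ (-μ - 1) := mul_nonneg (neg_pos.2 hμ).le (Real.rpow_nonneg hv.le _)
  have hcancel : v ^ (1 + μ) * v ^ (-μ - 1) = 1 := by
    rw [← Real.rpow_add hv, show 1 + μ + (-μ - 1) = 0 by ring, Real.rpow_zero]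
  calc v' * -μ * v ^ (-μ - 1) = v' * (-μ * v ^ (-μ - 1)) := by ring
    _ ≤ -c * v ^ (1 + μ) * (-μ * v ^ (-μ - 1)) := mul_le_mul_of_nonneg_right hle hscale
    _ = -(c * -μ) * (v ^ (1 + μ) * v ^ (-μ - 1)) := by ring
    _ = -(c * -μ) := by rw [hcancel, mul_one]

theorem antitoneOn_rpow_add_mul_of_deriv_le {V : ℝ → ℝ} {c μ a b : ℝ} (hμ : μ < 0)
    (hV : ContinuousOn V (Icc a b))
    (hdiff : ∀ x ∈ Ioo a b,
      0 < V x ∧ DifferentiableAt ℝ V x ∧ deriv V x ≤ -c * V x ^ (1 + μ)) :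
    AntitoneOn (fun t => V t ^ (-μ) + c * -μ * t) (Icc a b) := by
  have hderiv : ∀ x ∈ Ioo a b, HasDerivAt (fun t => V t ^ (-μ) + c * -μ * t)
      (deriv V x * -μ * V x ^ (-μ - 1) + c * -μ) x := fun x hx =>
    ((hdiff x hx).2.1.hasDerivAt.rpow_const (Or.inl (hdiff x hx).1.ne')).add
      ((hasDerivAt_id x).const_mul (c * -μ) |>.congr_deriv (mul_one _))
  apply antitoneOn_of_deriv_nonpos (convex_Icc a b)
  · exact (hV.rpow_const fun u hu => Or.inr (neg_pos.2 hμ).le).add (by fun_prop)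
  · rw [interior_Icc]
    exact fun x hx => (hderiv x hx).differentiableAt.differentiableWithinAt
  · rw [interior_Icc]
    intro x hx
    have hle := deriv_mul_rpow_le_of_deriv_le hμ (hdiff x hx).1 (hdiff x hx).2.2
    rw [(hderiv x hx).deriv]
    linarith

theorem stmt17_general (c μ : ℝ) (hc : 0 < c) (hμ : μ < 0)
    (V : ℝ → ℝ) (hcont : Continuous V) (hnn : ∀ t : ℝ, 0 ≤ V t)
    (hdiff : ∀ t : ℝ, 0 ≤ t → 0 < V t →
      DifferentiableAt ℝ V t ∧ deriv V t ≤ -c * V t ^ (1 + μ)) :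
    ∀ t : ℝ, V 0 ^ (-μ) / (c * (-μ)) ≤ t → V t = 0 := by
  intro t ht
  have hcν : 0 < c * -μ := mul_pos hc (neg_pos.2 hμ)
  have ht0 : 0 ≤ t := (div_nonneg (Real.rpow_nonneg (hnn 0) _) hcν.le).trans ht
  by_contra hVt
  obtain ⟨s, hs, hs_zero, hpos⟩ :=
    exists_left_or_zero_and_ne_zero_on_Ioc ht0 hcont.continuousOn
  have hanti := antitoneOn_rpow_add_mul_of_deriv_le (c := c) hμ hcont.continuousOn
    fun x hx =>
      have hVx : 0 < V x := (hnn x).lt_of_ne' (hpos x (Ioo_subset_Ioc_self hx))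
      ⟨hVx, hdiff x (hs.1.trans hx.1.le) hVx⟩
  have hdecrease := hanti (left_mem_Icc.2 hs.2) (right_mem_Icc.2 hs.2) hs.2
  have hstart : V s ^ (-μ) + c * -μ * s ≤ c * -μ * t := by
    rcases hs_zero with rfl | hVs
    · rw [div_le_iff₀ hcν] at ht
      linarith
    · rw [hVs, Real.zero_rpow (neg_pos.2 hμ).ne']
      nlinarith [hs.2]
  have hWt : 0 < V t ^ (-μ) := Real.rpow_pos_of_pos ((hnn t).lt_of_ne' hVt) _
  simp only at hdecrease
  linarith

/-- scalar finite-time comparison lemma: if `V ≥ 0` is continuous and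
satisfies `V' ≤ -c V^{1+μ}` (whenever `V > 0`, `t ≥ 0`) with `c > 0` and `-1 ≤ μ < 0`,
then `V` vanishes for all `t ≥ V(0)^{-μ}/(c·(-μ))`. -/
theorem stmt17 (c μ : ℝ) (hc : 0 < c) (hμ1 : -1 ≤ μ) (hμ : μ < 0)
    (V : ℝ → ℝ) (hcont : Continuous V) (hnn : ∀ t : ℝ, 0 ≤ V t)
    (hdiff : ∀ t : ℝ, 0 ≤ t → 0 < V t →
      DifferentiableAt ℝ V t ∧ deriv V t ≤ -c * V t ^ (1 + μ)) :
    ∀ t : ℝ, V 0 ^ (-μ) / (c * (-μ)) ≤ t → V t = 0 :=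
  stmt17_general c μ hc hμ V hcont hnn hdiff
end
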